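/- arXiv:1904.02987 — 6 statements merged into one kernel-verified Lean document; each statement's English description precedes it below -/
import Mathlib

section
/- If S is a numerical semigroup (a cofinite submonoid of the nonnegative integers) with set of gaps G(S) = ℕ \ S, pseudo-Frobenius set PF(S), Frobenius number F(S) and type t(S) = #PF(S), then the genus g(S) = #G(S) satisfies g(S) ≥ (F(S) + t(S))/2. -/
/-- A numerical semigroup, viewed as a set of integers: it consists of
nonnegative integers, contains 0, is closed under addition, and is cofinite
in the nonnegative integers. -/
def IsNumericalSemigroup (S : Set ℤ) : Prop :=
  (∀ z ∈ S, 0 ≤ z) ∧ 0 ∈ S ∧ (∀ a b, a ∈ S → b ∈ S → a + b ∈ S) ∧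
    {z : ℤ | 0 ≤ z ∧ z ∉ S}.Finite

/-- The set of gaps of `S`: nonnegative integers not in `S`. -/
def Gaps (S : Set ℤ) : Set ℤ := {z : ℤ | 0 ≤ z ∧ z ∉ S}

/-- `f` is the Frobenius number of `S`: the largest integer not in `S`. -/
def IsFrobenius (S : Set ℤ) (f : ℤ) : Prop := f ∉ S ∧ ∀ z : ℤ, z ∉ S → z ≤ f

/-- The set of pseudo-Frobenius numbers of `S`. -/
def PF (S : Set ℤ) : Set ℤ := {x : ℤ | x ∉ S ∧ ∀ s ∈ S, s ≠ 0 → x + s ∈ S}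

/-- `m` is the multiplicity of `S`: its smallest nonzero element. -/
def IsMultiplicity (S : Set ℤ) (m : ℤ) : Prop :=
  m ∈ S ∧ m ≠ 0 ∧ ∀ s ∈ S, s ≠ 0 → m ≤ s

/-- `S` is almost symmetric: `2 g(S) = F(S) + t(S)`. -/
def AlmostSymmetric (S : Set ℤ) : Prop :=
  ∃ f, IsFrobenius S f ∧ (2 * (Gaps S).ncard : ℤ) = f + ((PF S).ncard : ℤ)

/-- A gapset: a finite set of positive integers such that whenever a sum of
two positive integers lies in it, one of the summands does. -/
def IsGapset (G : Set ℤ) : Prop :=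
  G.Finite ∧ (∀ x ∈ G, 0 < x) ∧
    ∀ a b : ℤ, 0 < a → 0 < b → a + b ∈ G → a ∈ G ∨ b ∈ G

/-- The set `{1, …, F} \ {F - a : a ∈ ℕ \ S}`. -/
def GapsetOf (S : Set ℤ) (F : ℤ) : Set ℤ :=
  {z : ℤ | 1 ≤ z ∧ z ≤ F ∧ ¬ ∃ a : ℤ, 0 ≤ a ∧ a ∉ S ∧ z = F - a}

/-- The `s`-shifted canonical ideal `K_S(s) = {f + s - w : w ∈ ℤ \ S}`,
where `f` is the Frobenius number of `S`. -/
def KIdeal (S : Set ℤ) (f s : ℤ) : Set ℤ :=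
  {z : ℤ | ∃ w : ℤ, w ∉ S ∧ z = f + s - w}

theorem stmt0 (S : Set ℤ) (f : ℤ)
    (hS : IsNumericalSemigroup S) (hf : IsFrobenius S f) :
    (2 * (Gaps S).ncard : ℤ) ≥ f + ((PF S).ncard : ℤ) := by
  obtain ⟨hnn, h0, hadd, hfin⟩ := hS
  obtain ⟨hfS, hfmax⟩ := hf
  have hbig : ∀ z : ℤ, f < z → z ∈ S := by
    intro z hz; by_contra h; exact absurd (hfmax z h) (not_le.mpr hz)
  have hGfin : (Gaps S).Finite := hfin
  -- PF \ {f} ⊆ Gaps S  (when an element x < f would fail via s = f - x ... need f-x ∈ S)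
  have hPFle : ∀ x ∈ PF S, x ≤ f := fun x hx => hfmax x hx.1
  have hPFne : ∀ x ∈ PF S, x ≠ f → 0 ≤ x := by
    intro x hx hxf
    by_contra hneg
    push_neg at hneg
    have hxlt : x < f := lt_of_le_of_ne (hPFle x hx) hxf
    have hs : f - x ∈ S := hbig _ (by omega)
    have : x + (f - x) ∈ S := hx.2 _ hs (by omega)
    simp only [add_sub_cancel] at this
    exact hfS this
  have hBsub : PF S \ {f} ⊆ Gaps S := by
    intro x ⟨hx, hxf⟩
    exact ⟨hPFne x hx (by simpa using hxf), hx.1⟩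
  rcases lt_or_ge f 0 with hf0 | hf0
  · -- f < 0 : Gaps = ∅, PF ⊆ {f}
    have hG : Gaps S = ∅ := by
      ext z; simp only [Gaps, Set.mem_setOf_eq, Set.mem_empty_iff_false, iff_false]
      rintro ⟨hz0, hzS⟩; exact absurd (hfmax z hzS) (by omega)
    have hPF : PF S ⊆ {f} := by
      intro x hx
      rcases eq_or_ne x f with h | h
      · simp [h]
      · exact absurd (hPFne x hx h) (by have := lt_of_le_of_ne (hPFle x hx) h; omega)
    have ht : (PF S).ncard ≤ 1 := by
      calc (PF S).ncard ≤ ({f} : Set ℤ).ncard := Set.ncard_le_ncard hPF (Set.finite_singleton f)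
      _ = 1 := Set.ncard_singleton f
    rw [hG, Set.ncard_empty]
    push_cast
    omega
  · -- main case : 0 ≤ f
    set G := Gaps S with hGdef
    set T := S ∩ Set.Icc 0 f with hTdef
    set A := (fun s => f - s) '' T with hAdef
    set B := PF S \ {f} with hBdef
    have hGsub : G ⊆ Set.Icc 0 f := fun z ⟨h0z, hzS⟩ => ⟨h0z, hfmax z hzS⟩
    have hTfin : T.Finite := (Set.finite_Icc 0 f).subset (Set.inter_subset_right)
    have hAfin : A.Finite := hTfin.image _
    have hBfin : B.Finite := hGfin.subset hBsub
    have hAsub : A ⊆ G := by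
      rintro x ⟨s, ⟨hsS, hs0, hsf⟩, rfl⟩
      refine ⟨show (0:ℤ) ≤ f - s by omega, fun hc => hfS ?_⟩
      have := hadd _ _ hsS hc
      simpa using this
    have hdisj : Disjoint A B := by
      rw [Set.disjoint_left]
      rintro x ⟨s, ⟨hsS, hs0, hsf⟩, rfl⟩ ⟨hxPF, hxf⟩
      have hsne : s ≠ 0 := by
        intro h; apply hxf; simp [h]
      have := hxPF.2 s hsS hsne
      have : f ∈ S := by simpa using this
      exact hfS this
    have hIccsplit : Set.Icc 0 f = G ∪ T := by
      ext z
      simp only [Set.mem_Icc, Set.mem_union, hGdef, hTdef, Gaps, Set.mem_setOf_eq,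
        Set.mem_inter_iff]
      constructor
      · rintro ⟨h1, h2⟩
        by_cases hz : z ∈ S
        · exact Or.inr ⟨hz, h1, h2⟩
        · exact Or.inl ⟨h1, hz⟩
      · rintro (⟨h1, h2⟩ | ⟨_, h⟩)
        · exact ⟨h1, hfmax z h2⟩
        · exact h
    have hGTdisj : Disjoint G T := by
      rw [Set.disjoint_left]
      rintro z ⟨_, hzS⟩ ⟨hz, _⟩
      exact hzS hz
    have hIcard : (Set.Icc (0:ℤ) f).ncard = G.ncard + T.ncard := by
      rw [hIccsplit, Set.ncard_union_eq hGTdisj hGfin hTfin]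
    have hIccval : ((Set.Icc (0:ℤ) f).ncard : ℤ) = f + 1 := by
      rw [← Finset.coe_Icc, Set.ncard_coe_finset, Int.card_Icc]
      omega
    have hAcard : A.ncard = T.ncard :=
      Set.ncard_image_of_injective T (fun a b h => by omega)
    have hABle : A.ncard + B.ncard ≤ G.ncard := by
      rw [← Set.ncard_union_eq hdisj hAfin hBfin]
      exact Set.ncard_le_ncard (Set.union_subset hAsub hBsub) hGfin
    have hfPF : f ∈ PF S := by
      refine ⟨hfS, fun s hs hs0 => hbig _ ?_⟩
      have := hnn s hs
      omega
    have hPFcard : (PF S).ncard = B.ncard + 1 := by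
      have : PF S = B ∪ {f} := by
        rw [hBdef, Set.diff_union_self, Set.union_eq_self_of_subset_right]
        simpa using hfPF
      rw [this, Set.ncard_union_eq (by simp [hBdef]) hBfin (Set.finite_singleton f),
        Set.ncard_singleton]
    omega
end

section
/- Let S be a numerical semigroup with Frobenius number f and let F > 2f be a positive integer. Then the set G = {1,...,F} \ {F − a : a ∈ ℕ \ S} is a gapset, i.e., for all positive integers a, b with a + b ∈ G, either a ∈ G or b ∈ G. -/
theorem stmt2 (S : Set ℤ) (f F : ℤ)
    (hS : IsNumericalSemigroup S) (hf : IsFrobenius S f)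
    (hFpos : 0 < F) (hF : 2 * f < F) :
    IsGapset (GapsetOf S F) := by
  refine ⟨?_, ?_, ?_⟩
  · exact (Set.finite_Icc 1 F).subset (fun z hz => ⟨hz.1, hz.2.1⟩)
  · exact fun x hx => lt_of_lt_of_le one_pos hx.1
  · intro a b ha hb hab
    by_contra hcon
    push_neg at hcon
    obtain ⟨haG, hbG⟩ := hcon
    obtain ⟨h1, h2, h3⟩ := hab
    have haF : a ≤ F := by linarith
    have hbF : b ≤ F := by linarith
    -- a ∉ G with 1 ≤ a ≤ F gives F - a ∉ S
    have hga : F - a ∉ S := by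
      intro hs
      exact haG ⟨by linarith, haF, fun ⟨w, hw0, hwS, hw⟩ => hwS (by rw [show w = F - a by linarith] ; exact hs)⟩
    have hgb : F - b ∉ S := by
      intro hs
      exact hbG ⟨by linarith, hbF, fun ⟨w, hw0, hwS, hw⟩ => hwS (by rw [show w = F - b by linarith] ; exact hs)⟩
    have h4 := hf.2 _ hga
    have h5 := hf.2 _ hgb
    linarith
end

section
/- Let S be a numerical semigroup with Frobenius number f and genus g, and let F > 2f be a positive integer. Then the numerical semigroup S' = ℕ \ ({1,...,F} \ {F − a : a ∈ ℕ \ S}) is almost symmetric with Frobenius number F and type F − 2g. -/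
/-!
Every gap `a` of `S` lies in `[1, f]`, so the nonzero elements of
`S' = ℕ \ GapsetOf S F` are the integers `F - a` and those above `F`; all of them exceed `F / 2`
because `2 f < F`, which makes `S'` closed under addition with Frobenius number `F`.
Its gaps are `{1, …, F}` minus the `g` reflections `F - a`, so `g(S') = F - g`.
A gap `x` of `S'` is pseudo-Frobenius exactly when `x ∈ S`: if `x` is a gap of `S` then
`x + (F - x) = F`, and if `x ∈ S` then `x + (F - a)` is either above `F` or equal to
`F - (a - x)` with `a - x` again a gap of `S`. Hence `t(S') = (F - g) - g = F - 2 g`,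
which is exactly the almost symmetry equation `2 g(S') = F + t(S')`.
-/

def semigroupOfGaps (G : Set ℤ) : Set ℤ := {z : ℤ | 0 ≤ z ∧ z ∉ G}

variable {S : Set ℤ} {f F a z : ℤ}

lemma one_le_of_mem_gaps (h0 : 0 ∈ S) (ha : a ∈ Gaps S) : 1 ≤ a := by
  obtain ⟨ha0, haS⟩ := ha
  have : a ≠ 0 := by rintro rfl; exact haS h0
  omega

lemma gaps_semigroupOfGaps {G : Set ℤ} (hG : ∀ z ∈ G, 0 ≤ z) :
    Gaps (semigroupOfGaps G) = G := by
  ext z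
  simp only [Gaps, semigroupOfGaps, Set.mem_ofPred_eq, not_and, not_not]
  exact ⟨fun h => h.2 h.1, fun h => ⟨hG z h, fun _ => h⟩⟩

lemma gapsetOf_eq_Icc_sdiff_image (S : Set ℤ) (F : ℤ) :
    GapsetOf S F = Set.Icc 1 F \ (fun a => F - a) '' Gaps S := by
  ext z
  simp only [GapsetOf, Gaps, Set.mem_ofPred_eq, Set.mem_sdiff, Set.mem_Icc, Set.mem_image,
    and_assoc, eq_comm (a := z)]

lemma gaps_semigroupOfGaps_gapsetOf (S : Set ℤ) (F : ℤ) :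
    Gaps (semigroupOfGaps (GapsetOf S F)) = GapsetOf S F :=
  gaps_semigroupOfGaps fun _ hz => by linarith [hz.1]

lemma mem_semigroupOfGaps_gapsetOf_of_lt (hz0 : 0 ≤ z) (hz : F < z) :
    z ∈ semigroupOfGaps (GapsetOf S F) :=
  ⟨hz0, fun h => by linarith [h.2.1]⟩

lemma sub_mem_semigroupOfGaps_gapsetOf (ha : a ∈ Gaps S) (haF : a ≤ F) :
    F - a ∈ semigroupOfGaps (GapsetOf S F) :=
  ⟨by linarith, fun h => h.2.2 ⟨a, ha.1, ha.2, rfl⟩⟩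

lemma mem_semigroupOfGaps_gapsetOf_cases (hz : z ∈ semigroupOfGaps (GapsetOf S F)) :
    z = 0 ∨ F < z ∨ ∃ a ∈ Gaps S, z = F - a := by
  obtain ⟨hz0, hzG⟩ := hz
  by_contra! h
  exact hzG ⟨by omega, h.2.1, fun ⟨a, ha0, haS, hza⟩ => h.2.2 a ⟨ha0, haS⟩ hza⟩

lemma lt_two_mul_of_mem_semigroupOfGaps_gapsetOf (hf : IsFrobenius S f) (hF : 2 * f < F)
    (hz : z ∈ semigroupOfGaps (GapsetOf S F)) (hz0 : z ≠ 0) : F < 2 * z := by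
  rcases mem_semigroupOfGaps_gapsetOf_cases hz with h | h | ⟨a, ha, rfl⟩
  · exact absurd h hz0
  · linarith [hz.1]
  · linarith [hf.2 a ha.2]

lemma isNumericalSemigroup_semigroupOfGaps_gapsetOf (hf : IsFrobenius S f) (hF : 2 * f < F) :
    IsNumericalSemigroup (semigroupOfGaps (GapsetOf S F)) := by
  refine ⟨fun z hz => hz.1, ⟨le_rfl, fun h => by linarith [h.1]⟩, fun a b ha hb => ?_, ?_⟩
  · rcases eq_or_ne a 0 with rfl | ha0
    · simpa using hb
    rcases eq_or_ne b 0 with rfl | hb0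
    · simpa using ha
    have := lt_two_mul_of_mem_semigroupOfGaps_gapsetOf hf hF ha ha0
    have := lt_two_mul_of_mem_semigroupOfGaps_gapsetOf hf hF hb hb0
    exact mem_semigroupOfGaps_gapsetOf_of_lt (by linarith [ha.1, hb.1]) (by linarith)
  · refine (Set.finite_Icc 0 F).subset fun z ⟨hz0, hz⟩ => ⟨hz0, ?_⟩
    by_contra! h
    exact hz (mem_semigroupOfGaps_gapsetOf_of_lt hz0 h)

lemma isFrobenius_semigroupOfGaps_gapsetOf (h0 : 0 ∈ S) (hF : 0 < F) :
    IsFrobenius (semigroupOfGaps (GapsetOf S F)) F := by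
  refine ⟨fun hFS => ?_, fun z hz => ?_⟩
  · rcases mem_semigroupOfGaps_gapsetOf_cases hFS with h | h | ⟨a, ha, h⟩
    · omega
    · omega
    · have := one_le_of_mem_gaps h0 ha
      omega
  · by_contra! h
    exact hz (mem_semigroupOfGaps_gapsetOf_of_lt (by omega) h)

lemma gaps_subset_gapsetOf (h0 : 0 ∈ S) (hf : IsFrobenius S f) (hF : 2 * f < F) :
    Gaps S ⊆ GapsetOf S F := by
  intro a ha
  have ha1 := one_le_of_mem_gaps h0 ha
  have haf := hf.2 a ha.2
  refine ⟨ha1, by omega, fun ⟨b, hb0, hbS, hab⟩ => ?_⟩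
  have := hf.2 b hbS
  omega

lemma pf_semigroupOfGaps_gapsetOf (hS : IsNumericalSemigroup S) (hf : IsFrobenius S f)
    (hF : 0 < F) (hfF : f < F) :
    PF (semigroupOfGaps (GapsetOf S F)) = GapsetOf S F \ Gaps S := by
  have hFT := (isFrobenius_semigroupOfGaps_gapsetOf hS.2.1 hF).1
  ext x
  constructor
  · rintro ⟨hxT, hx⟩
    have hcomp : F - x ∉ semigroupOfGaps (GapsetOf S F) ∨ F - x = 0 := by
      by_contra! h
      exact hFT (by simpa using hx _ h.1 h.2)
    have hx0 : 0 ≤ x := by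
      by_contra! h
      rcases hcomp with h' | h'
      · exact h' (mem_semigroupOfGaps_gapsetOf_of_lt (by omega) (by omega))
      · omega
    have hxG : x ∉ Gaps S := fun hxG => by
      have := hf.2 x hxG.2
      rcases hcomp with h' | h'
      · exact h' (sub_mem_semigroupOfGaps_gapsetOf hxG (by omega))
      · omega
    exact ⟨by simpa [semigroupOfGaps, hx0] using hxT, hxG⟩
  · rintro ⟨hxG, hxGS⟩
    have hx1 : 1 ≤ x := hxG.1
    have hxS : x ∈ S := by
      by_contra h
      exact hxGS ⟨by omega, h⟩
    refine ⟨fun h => h.2 hxG, fun s hs hs0 => ?_⟩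
    rcases mem_semigroupOfGaps_gapsetOf_cases hs with rfl | h | ⟨a, ha, rfl⟩
    · exact absurd rfl hs0
    · exact mem_semigroupOfGaps_gapsetOf_of_lt (by omega) (by omega)
    · have haf := hf.2 a ha.2
      rcases lt_or_ge a x with h | h
      · exact mem_semigroupOfGaps_gapsetOf_of_lt (by omega) (by omega)
      · have hax : a - x ∈ Gaps S :=
          ⟨by omega, fun hc => ha.2 (by simpa using hS.2.2.1 x (a - x) hxS hc)⟩
        rw [show x + (F - a) = F - (a - x) by ring]
        exact sub_mem_semigroupOfGaps_gapsetOf hax (by omega)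

lemma ncard_gapsetOf (hfin : (Gaps S).Finite) (hf : IsFrobenius S f) (hfF : f < F)
    (hF : 0 ≤ F) : ((GapsetOf S F).ncard : ℤ) = F - (Gaps S).ncard := by
  have hsub : (fun a => F - a) '' Gaps S ⊆ Set.Icc 1 F := by
    rintro _ ⟨a, ha, rfl⟩
    have := hf.2 a ha.2
    exact ⟨show 1 ≤ F - a by omega, show F - a ≤ F by linarith [ha.1]⟩
  have hIcc : ((Set.Icc (1 : ℤ) F).ncard : ℤ) = F := by
    rw [← Finset.coe_Icc, Set.ncard_coe_finset, Int.card_Icc]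
    omega
  have himage : ((fun a => F - a) '' Gaps S).ncard = (Gaps S).ncard :=
    Set.ncard_image_of_injective _ sub_right_injective
  have hle := Set.ncard_le_ncard hsub (Set.finite_Icc 1 F)
  rw [gapsetOf_eq_Icc_sdiff_image, Set.ncard_sdiff hsub (hfin.image _), Nat.cast_sub hle,
    hIcc, himage]

lemma ncard_pf_semigroupOfGaps_gapsetOf (hS : IsNumericalSemigroup S) (hf : IsFrobenius S f)
    (hF : 0 < F) (hfF : 2 * f < F) :
    ((PF (semigroupOfGaps (GapsetOf S F))).ncard : ℤ) = F - 2 * (Gaps S).ncard := by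
  have hsub := gaps_subset_gapsetOf hS.2.1 hf hfF
  have hle := Set.ncard_le_ncard hsub ((Set.finite_Icc 1 F).subset fun z hz => ⟨hz.1, hz.2.1⟩)
  rw [pf_semigroupOfGaps_gapsetOf hS hf hF (by omega), Set.ncard_sdiff hsub hS.2.2.2,
    Nat.cast_sub hle, ncard_gapsetOf hS.2.2.2 hf (by omega) hF.le]
  ring

theorem stmt3 (S : Set ℤ) (f F : ℤ)
    (hS : IsNumericalSemigroup S) (hf : IsFrobenius S f)
    (hFpos : 0 < F) (hF : 2 * f < F) :
    IsNumericalSemigroup {z : ℤ | 0 ≤ z ∧ z ∉ GapsetOf S F} ∧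
    AlmostSymmetric {z : ℤ | 0 ≤ z ∧ z ∉ GapsetOf S F} ∧
    IsFrobenius {z : ℤ | 0 ≤ z ∧ z ∉ GapsetOf S F} F ∧
    ((PF {z : ℤ | 0 ≤ z ∧ z ∉ GapsetOf S F}).ncard : ℤ)
      = F - 2 * ((Gaps S).ncard : ℤ) := by
  rw [show {z : ℤ | 0 ≤ z ∧ z ∉ GapsetOf S F} = semigroupOfGaps (GapsetOf S F) from rfl]
  have hgaps : ((Gaps (semigroupOfGaps (GapsetOf S F))).ncard : ℤ) = F - (Gaps S).ncard := by
    rw [gaps_semigroupOfGaps_gapsetOf, ncard_gapsetOf hS.2.2.2 hf (by omega) hFpos.le]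
  have hpf := ncard_pf_semigroupOfGaps_gapsetOf hS hf hFpos hF
  have hfrob := isFrobenius_semigroupOfGaps_gapsetOf (F := F) hS.2.1 hFpos
  exact ⟨isNumericalSemigroup_semigroupOfGaps_gapsetOf hf hF, ⟨F, hfrob, by linarith⟩, hfrob, hpf⟩
end

section
/- Let S be a numerical semigroup with Frobenius number f and let F > 2f. The semigroup S' = ℕ \ ({1,...,F} \ {F − a : a ∈ ℕ \ S}) has multiplicity F − f, i.e., the smallest positive element of S' is F − f. -/
theorem stmt4 (S : Set ℤ) (f F : ℤ)
    (hS : IsNumericalSemigroup S) (hf : IsFrobenius S f)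
    (hFpos : 0 < F) (hF : 2 * f < F) :
    IsMultiplicity {z : ℤ | 0 ≤ z ∧ z ∉ GapsetOf S F} (F - f) := by
  obtain ⟨hpos, h0, hadd, hfin⟩ := hS
  obtain ⟨hfns, hfmax⟩ := hf
  have hneg : (-1:ℤ) ∉ S := fun h => by have := hpos _ h; omega
  have hfge : -1 ≤ f := hfmax _ hneg
  refine ⟨⟨by omega, ?_⟩, by omega, ?_⟩
  · rintro ⟨h1, h2, h3⟩
    rcases le_or_gt 0 f with hf0 | hf0
    · exact h3 ⟨f, hf0, hfns, by ring⟩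
    · omega
  · rintro s ⟨hs0, hsg⟩ hsne
    by_contra h
    push_neg at h
    have hex : ∃ a : ℤ, 0 ≤ a ∧ a ∉ S ∧ s = F - a := by
      by_contra hc
      exact hsg ⟨by omega, by omega, hc⟩
    obtain ⟨a, ha0, haS, rfl⟩ := hex
    have := hfmax a haS
    omega
end

section
/- Let S be a numerical semigroup with genus g and let F > 2F(S) be a positive integer. Then (ℕ ∩ K_S(F − F(S)))* = S, where for a numerical semigroup T, T* = T ∪ PF(T). -/
theorem stmt11 (S : Set ℤ) (f F : ℤ)
    (hS : IsNumericalSemigroup S) (hf : IsFrobenius S f)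
    (hFpos : 0 < F) (hF : 2 * f < F) :
    {z : ℤ | 0 ≤ z ∧ z ∈ KIdeal S f (F - f)}
        ∪ PF {z : ℤ | 0 ≤ z ∧ z ∈ KIdeal S f (F - f)} = S := by
  obtain ⟨hpos, h0, hadd, hfin⟩ := hS
  have hfle : ∀ z : ℤ, z ∉ S → z ≤ f := hf.2
  have hFS : F ∈ S := by
    by_contra h
    have := hfle F h
    omega
  have hK : ∀ z : ℤ, z ∈ KIdeal S f (F - f) ↔ F - z ∉ S := by
    intro z
    constructor
    · rintro ⟨w, hw, rfl⟩
      have h1 : F - (f + (F - f) - w) = w := by ring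
      rw [h1]; exact hw
    · intro h
      exact ⟨F - z, h, by ring⟩
  set T : Set ℤ := {z : ℤ | 0 ≤ z ∧ z ∈ KIdeal S f (F - f)} with hTdef
  have hT : ∀ z : ℤ, z ∈ T ↔ 0 ≤ z ∧ F - z ∉ S := by
    intro z
    simp only [hTdef, Set.mem_setOf_eq, hK]
  ext x
  constructor
  · rintro (hx | hx)
    · -- T ⊆ S
      rw [hT] at hx
      by_contra hxS
      have h1 := hfle x hxS
      have h2 := hfle (F - x) hx.2
      omega
    · -- PF T ⊆ S
      obtain ⟨hxT, hx⟩ := hx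
      by_contra hxS
      have hxf := hfle x hxS
      have htT : F - x ∈ T := by
        rw [hT]
        constructor
        · omega
        · have : F - (F - x) = x := by ring
          rw [this]; exact hxS
      have hne : F - x ≠ 0 := by
        intro h
        have : x = F := by omega
        exact hxS (this ▸ hFS)
      have := hx (F - x) htT hne
      rw [hT] at this
      have h1 : x + (F - x) = F := by ring
      rw [h1] at this
      have h2 : F - F = 0 := by ring
      rw [h2] at this
      exact this.2 h0
  · intro hx
    have hx0 : 0 ≤ x := hpos x hx
    by_cases hxT : x ∈ T
    · exact Or.inl hxT
    · right
      refine ⟨hxT, ?_⟩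
      intro t ht htne
      rw [hT] at ht
      rw [hT]
      refine ⟨by omega, ?_⟩
      intro hcon
      apply ht.2
      have := hadd _ _ hcon hx
      have h1 : F - (x + t) + x = F - t := by ring
      rwa [h1] at this
end

section
/- Let F ∈ ℕ and let t ≥ (F−1)/2. If S'_1 and S'_2 are almost symmetric numerical semigroups, both with Frobenius number F and type t, such that PF(S'_1) = PF(S'_2), then S'_1 = S'_2. -/
lemma big_mem {S : Set ℤ} {F : ℤ} (hFr : IsFrobenius S F) {z : ℤ} (hz : F < z) : z ∈ S := by
  by_contra h
  exact absurd (hFr.2 z h) (not_le.mpr hz)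

lemma mul_mem {S : Set ℤ} (hS : IsNumericalSemigroup S) {s : ℤ} (hs : s ∈ S) :
    ∀ k : ℕ, (k : ℤ) * s ∈ S := by
  intro k
  induction k with
  | zero => simpa using hS.2.1
  | succ n ih =>
    push_cast
    rw [add_mul, one_mul]
    exact hS.2.2.1 _ _ ih hs

lemma PF_subset {S : Set ℤ} {F : ℤ} (hF : 0 ≤ F) (hS : IsNumericalSemigroup S) (hFr : IsFrobenius S F) :
    PF S ⊆ Set.Ioc 0 F := by
  intro p hp
  refine ⟨?_, hFr.2 p hp.1⟩
  by_contra h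
  push_neg at h
  rcases h.lt_or_eq with hneg | h0
  · have h1 : F - p ∈ S := big_mem hFr (by linarith)
    have h2 : p + (F - p) ∈ S := hp.2 _ h1 (by linarith)
    rw [add_sub_cancel] at h2
    exact hFr.1 h2
  · exact hp.1 (h0 ▸ hS.2.1)

lemma F_mem_PF {S : Set ℤ} {F : ℤ} (hS : IsNumericalSemigroup S) (hFr : IsFrobenius S F) :
    F ∈ PF S := by
  refine ⟨hFr.1, fun s hs hs0 => big_mem hFr ?_⟩
  have := hS.1 s hs
  have : 0 < s := lt_of_le_of_ne this (Ne.symm hs0)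
  linarith

lemma type_le {S : Set ℤ} {F : ℤ} {t : ℕ} (hF : 0 ≤ F) (hS : IsNumericalSemigroup S)
    (hFr : IsFrobenius S F) (htt : (PF S).ncard = t) :
    ∀ s ∈ S, s ≠ 0 → (t : ℤ) + 1 ≤ s := by
  intro s hs hs0
  have hspos : 0 < s := lt_of_le_of_ne (hS.1 s hs) (Ne.symm hs0)
  have hPFfin : (PF S).Finite := (Set.finite_Ioc 0 F).subset (PF_subset hF hS hFr)
  -- nonzero residue
  have hres : ∀ p ∈ PF S, p % s ≠ 0 := by
    intro p hp h0
    have hdvd : s ∣ p := Int.dvd_of_emod_eq_zero h0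
    obtain ⟨k, hk⟩ := hdvd
    have hppos : 0 < p := (PF_subset hF hS hFr hp).1
    have hkpos : 0 < k := by nlinarith
    have : ((k.toNat : ℤ)) * s ∈ S := mul_mem hS hs k.toNat
    rw [Int.toNat_of_nonneg hkpos.le] at this
    rw [mul_comm] at this
    exact hp.1 (hk ▸ this)
  -- injectivity of mod s
  have key : ∀ p ∈ PF S, ∀ q ∈ PF S, p % s = q % s → p < q → False := by
    intro p hp q hq hpq hlt
    have hdvd : s ∣ (q - p) := by
      have : (q - p) % s = 0 := by
        rw [Int.sub_emod, hpq, sub_self, Int.zero_emod]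
      exact Int.dvd_of_emod_eq_zero this
    obtain ⟨k, hk⟩ := hdvd
    have hkpos : 0 < k := by nlinarith
    have hmem : ((k.toNat : ℤ)) * s ∈ S := mul_mem hS hs k.toNat
    rw [Int.toNat_of_nonneg hkpos.le, mul_comm] at hmem
    rw [← hk] at hmem
    have : p + (q - p) ∈ S := hp.2 _ hmem (by linarith)
    rw [add_sub_cancel] at this
    exact hq.1 this
  have hinj : Set.InjOn (· % s) (PF S) := by
    intro p hp q hq hpq
    rcases lt_trichotomy p q with h | h | h
    · exact absurd (key p hp q hq hpq h) not_false
    · exact h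
    · exact absurd (key q hq p hp hpq.symm h) not_false
  have himg : (· % s) '' PF S ⊆ Set.Ioo 0 s := by
    rintro _ ⟨p, hp, rfl⟩
    exact ⟨lt_of_le_of_ne (Int.emod_nonneg p hs0) (Ne.symm (hres p hp)),
      Int.emod_lt_of_pos p hspos⟩
  have h1 : (PF S).ncard = ((· % s) '' PF S).ncard := (Set.ncard_image_of_injOn hinj).symm
  have h2 : ((· % s) '' PF S).ncard ≤ (Set.Ioo (0:ℤ) s).ncard :=
    Set.ncard_le_ncard himg (Set.finite_Ioo 0 s)
  have h3 : (Set.Ioo (0:ℤ) s).ncard = (s - 1).toNat := by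
    rw [← Finset.coe_Ioo, Set.ncard_coe_finset, Int.card_Ioo]
    simp
  have h4 : t ≤ (s - 1).toNat := by
    rw [← htt, h1]
    exact h2.trans_eq h3
  omega

lemma pair_mem {S : Set ℤ} {F : ℤ} (hF : 0 ≤ F) (hS : IsNumericalSemigroup S)
    (ha : AlmostSymmetric S) (hFr : IsFrobenius S F) :
    ∀ x : ℤ, x ∉ S → F - x ∉ S → x ∈ PF S := by
  classical
  obtain ⟨f, hf, hg⟩ := ha
  have hfF : f = F := le_antisymm (hFr.2 f hf.1) (hf.2 F hFr.1)
  rw [hfF] at hg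
  set t : ℕ := (PF S).ncard with htdef
  set I : Finset ℤ := Finset.Icc 0 F with hI
  set A : Finset ℤ := I.filter (fun x => x ∉ S) with hA
  set A' : Finset ℤ := I.filter (fun x => F - x ∉ S) with hA'
  -- Gaps S = ↑A
  have hGaps : Gaps S = ↑A := by
    ext z
    simp only [Gaps, Set.mem_setOf_eq, hA, Finset.coe_filter, Finset.mem_Icc, hI,
      Set.mem_setOf_eq]
    constructor
    · rintro ⟨h0, hz⟩; exact ⟨⟨h0, hFr.2 z hz⟩, hz⟩
    · rintro ⟨⟨h0, _⟩, hz⟩; exact ⟨h0, hz⟩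
  have hgA : (Gaps S).ncard = A.card := by rw [hGaps, Set.ncard_coe_finset]
  -- A' is the image of A under x ↦ F - x
  have hImg : A' = A.image (fun x => F - x) := by
    ext z
    simp only [hA', hA, Finset.mem_filter, Finset.mem_image, hI, Finset.mem_Icc]
    constructor
    · rintro ⟨⟨h0, hzF⟩, hz⟩
      exact ⟨F - z, ⟨⟨by linarith, by linarith⟩, hz⟩, by ring⟩
    · rintro ⟨a, ⟨⟨h0, haF⟩, ha⟩, rfl⟩
      exact ⟨⟨by linarith, by linarith⟩, by simpa using ha⟩
  have hcardA' : A'.card = A.card := by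
    rw [hImg]
    exact Finset.card_image_of_injective _ sub_right_injective
  -- A ∪ A' = I
  have hUnion : A ∪ A' = I := by
    apply Finset.Subset.antisymm
    · intro z hz
      rcases Finset.mem_union.mp hz with h | h
      · exact (Finset.mem_filter.mp h).1
      · exact (Finset.mem_filter.mp h).1
    · intro z hz
      by_cases hzS : z ∈ S
      · refine Finset.mem_union_right _ (Finset.mem_filter.mpr ⟨hz, fun hFz => ?_⟩)
        exact hFr.1 (by simpa using hS.2.2.1 z (F - z) hzS hFz)
      · exact Finset.mem_union_left _ (Finset.mem_filter.mpr ⟨hz, hzS⟩)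
  have hcardI : (I.card : ℤ) = F + 1 := by
    rw [hI, Int.card_Icc]
    omega
  have hcount : (A.card : ℤ) + (A'.card : ℤ) = (I.card : ℤ) + ((A ∩ A').card : ℤ) := by
    rw [← hUnion]
    exact_mod_cast (congrArg (Nat.cast : ℕ → ℤ) (Finset.card_union_add_card_inter A A')).symm
  -- PF as a finset
  set Pf : Finset ℤ := I.filter (fun x => x ∈ PF S) with hPf
  have hPFeq : PF S = ↑Pf := by
    ext p
    simp only [hPf, Finset.coe_filter, Set.mem_setOf_eq, hI, Finset.mem_Icc]
    constructor
    · intro hp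
      have := PF_subset hF hS hFr hp
      exact ⟨⟨this.1.le, this.2⟩, hp⟩
    · rintro ⟨_, hp⟩; exact hp
  have htPf : t = Pf.card := by rw [htdef, hPFeq, Set.ncard_coe_finset]
  have hFPf : F ∈ Pf := by
    rw [hPf, Finset.mem_filter]
    exact ⟨Finset.mem_Icc.mpr ⟨hF, le_refl F⟩, F_mem_PF hS hFr⟩
  -- erase F ⊆ A ∩ A'
  have hsub : Pf.erase F ⊆ A ∩ A' := by
    intro p hp
    have hpF : p ≠ F := Finset.ne_of_mem_erase hp
    have hpPf := Finset.mem_of_mem_erase hp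
    rw [hPf, Finset.mem_filter] at hpPf
    obtain ⟨hpI, hpPF⟩ := hpPf
    refine Finset.mem_inter.mpr ⟨Finset.mem_filter.mpr ⟨hpI, hpPF.1⟩,
      Finset.mem_filter.mpr ⟨hpI, fun hFp => ?_⟩⟩
    have hne : F - p ≠ 0 := fun h => hpF (by linarith)
    have := hpPF.2 _ hFp hne
    rw [add_sub_cancel] at this
    exact hFr.1 this
  -- cardinalities force equality
  have hgeq : 2 * (A.card : ℤ) = F + t := by rw [← hgA]; exact_mod_cast hg
  have hcardInter : ((A ∩ A').card : ℤ) = (t : ℤ) - 1 := by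
    have := hcount
    rw [hcardA', hcardI] at this
    linarith
  have htpos : 1 ≤ Pf.card := Finset.card_pos.mpr ⟨F, hFPf⟩
  have hcardErase : ((Pf.erase F).card : ℤ) = (t : ℤ) - 1 := by
    rw [Finset.card_erase_of_mem hFPf, htPf]
    push_cast [htpos]
    omega
  have heq : Pf.erase F = A ∩ A' := by
    apply Finset.eq_of_subset_of_card_le hsub
    omega
  -- conclude
  intro x hx hFx
  have hxI : x ∈ I := by
    rw [hI, Finset.mem_Icc]
    have h1 := hFr.2 x hx
    have h2 := hFr.2 _ hFx
    constructor <;> linarith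
  have hxAA : x ∈ A ∩ A' := Finset.mem_inter.mpr
    ⟨Finset.mem_filter.mpr ⟨hxI, hx⟩, Finset.mem_filter.mpr ⟨hxI, hFx⟩⟩
  rw [← heq] at hxAA
  have := Finset.mem_of_mem_erase hxAA
  rw [hPf, Finset.mem_filter] at this
  exact this.2

lemma char_lemma (F : ℤ) (hF : 0 ≤ F) (t : ℕ) (ht : F - 1 ≤ 2 * (t : ℤ))
    (S : Set ℤ) (hS : IsNumericalSemigroup S) (ha : AlmostSymmetric S)
    (hFr : IsFrobenius S F) (htt : (PF S).ncard = t) :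
    S = {x : ℤ | x = 0 ∨ F < x ∨
      (0 < x ∧ x < F ∧ F < 2 * x ∧ x ∉ PF S ∧ F - x ∉ PF S)} := by
  ext x
  simp only [Set.mem_setOf_eq]
  constructor
  · intro hx
    by_cases hx0 : x = 0
    · exact Or.inl hx0
    by_cases hxF : F < x
    · exact Or.inr (Or.inl hxF)
    push_neg at hxF
    refine Or.inr (Or.inr ?_)
    have hxpos : 0 < x := lt_of_le_of_ne (hS.1 x hx) (Ne.symm hx0)
    have hxlt : x < F := lt_of_le_of_ne hxF (fun h => hFr.1 (h ▸ hx))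
    have hbig : (t : ℤ) + 1 ≤ x := type_le hF hS hFr htt x hx hx0
    refine ⟨hxpos, hxlt, by linarith, fun hp => hp.1 hx, fun hp => ?_⟩
    have := hp.2 x hx hx0
    rw [sub_add_cancel] at this
    exact hFr.1 this
  · rintro (rfl | hbig | ⟨hxpos, hxlt, hx2, hxPF, hFxPF⟩)
    · exact hS.2.1
    · exact big_mem hFr hbig
    · by_contra hx
      have hFx : F - x ∉ S := by
        intro hFx
        have hne : F - x ≠ 0 := by intro h; exact absurd (by linarith : x = F) (ne_of_lt hxlt)
        have := type_le hF hS hFr htt _ hFx hne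
        linarith
      exact hxPF (pair_mem hF hS ha hFr x hx hFx)

theorem stmt16 (F : ℤ) (hF : 0 ≤ F) (t : ℕ)
    (ht : F - 1 ≤ 2 * (t : ℤ))
    (S1 S2 : Set ℤ)
    (hS1 : IsNumericalSemigroup S1) (hS2 : IsNumericalSemigroup S2)
    (ha1 : AlmostSymmetric S1) (ha2 : AlmostSymmetric S2)
    (hF1 : IsFrobenius S1 F) (hF2 : IsFrobenius S2 F)
    (ht1 : (PF S1).ncard = t) (ht2 : (PF S2).ncard = t)
    (hPF : PF S1 = PF S2) : S1 = S2 := by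
  rw [char_lemma F hF t ht S1 hS1 ha1 hF1 ht1,
    char_lemma F hF t ht S2 hS2 ha2 hF2 ht2, hPF]
end
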